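/- arXiv:2207.04486 — 3 statements merged into one kernel-verified Lean document; each statement's English description precedes it below -/
import Mathlib

section
/- For every bounded continuous section f of π, every y ∈ Y and every δ > 0, the map t ↦ iQ_t f(y) is Lipschitz on (δ, ∞) with constant Osc(f)/δ, i.e. |iQ_t f(y) − iQ_s f(y)| ≤ (Osc(f)/δ) · |s − t| for all s, t ∈ (δ, ∞), where Osc(f) = sup_{z ∈ Y} max_{j=1,…,κ} f_j(z) − inf_{z ∈ Y} max_{j=1,…,κ} f_j(z). -/
open Metric Set Filter Topology MeasureTheory

/-- `F(t,y,z) = max_j f_j(z) + d(f(z), π⁻¹(y))² / (2t)`. -/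
noncomputable def hlF {κ : ℕ} (Y : Set (EuclideanSpace ℝ (Fin κ)))
    (π : EuclideanSpace ℝ (Fin κ) → Y) (f : Y → EuclideanSpace ℝ (Fin κ))
    (t : ℝ) (y z : Y) : ℝ :=
  (⨆ j, f z j) + (Metric.infDist (f z) (π ⁻¹' {y}))^2 / (2*t)

/-- The intrinsic Hopf–Lax semigroup `iQ_t f(y) = inf_{z ∈ Y} F(t,y,z)`. -/
noncomputable def iQ {κ : ℕ} (Y : Set (EuclideanSpace ℝ (Fin κ)))
    (π : EuclideanSpace ℝ (Fin κ) → Y) (f : Y → EuclideanSpace ℝ (Fin κ))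
    (t : ℝ) (y : Y) : ℝ :=
  ⨅ z : Y, hlF Y π f t y z

/-- A minimizing sequence for `iQ_t f(y)`. -/
def IsMinSeq {κ : ℕ} (Y : Set (EuclideanSpace ℝ (Fin κ)))
    (π : EuclideanSpace ℝ (Fin κ) → Y) (f : Y → EuclideanSpace ℝ (Fin κ))
    (t : ℝ) (y : Y) (u : ℕ → Y) : Prop :=
  Filter.Tendsto (fun n => hlF Y π f t y (u n)) Filter.atTop (nhds (iQ Y π f t y))

/-- `iD⁺f(y,t)`. -/
noncomputable def iDp {κ : ℕ} (Y : Set (EuclideanSpace ℝ (Fin κ)))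
    (π : EuclideanSpace ℝ (Fin κ) → Y) (f : Y → EuclideanSpace ℝ (Fin κ))
    (y : Y) (t : ℝ) : ℝ :=
  sSup { a : ℝ | ∃ u : ℕ → Y, IsMinSeq Y π f t y u ∧
    a = Filter.limsup (fun n => Metric.infDist (f (u n)) (π ⁻¹' {y})) Filter.atTop }

/-- `iD⁻f(y,t)`. -/
noncomputable def iDm {κ : ℕ} (Y : Set (EuclideanSpace ℝ (Fin κ)))
    (π : EuclideanSpace ℝ (Fin κ) → Y) (f : Y → EuclideanSpace ℝ (Fin κ))
    (y : Y) (t : ℝ) : ℝ :=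
  sInf { a : ℝ | ∃ u : ℕ → Y, IsMinSeq Y π f t y u ∧
    a = Filter.liminf (fun n => Metric.infDist (f (u n)) (π ⁻¹' {y})) Filter.atTop }

/-!
Write `iQ_t f(y) = inf_z (g z + c z / t)` with `g z = max_j f_j(z)` and
`c z = d(f(z), π⁻¹(y))² / 2 ≥ 0`; since `f` is a section, `c y = 0`, so `iQ_t f(y) ≤ sup g`.
The function `t ↦ iQ_t f(y)` is nonincreasing. For `δ < s ≤ t` and any `z`, either
`c z / t ≤ Osc(g)`, and then `g z + c z / s = g z + c z / t + (c z / t)(t - s)/s` exceeds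
`g z + c z / t` by at most `Osc(g)(t - s)/δ`; or `c z / t > Osc(g)`, and then
`g z + c z / t > sup g ≥ iQ_s f(y)`. Taking the infimum over `z` gives
`iQ_s f(y) - iQ_t f(y) ≤ Osc(g)(t - s)/δ`.
-/

lemma abs_iSup_le {ι : Type*} [Finite ι] {x : ι → ℝ} {C : ℝ} (hC : 0 ≤ C)
    (hx : ∀ j, |x j| ≤ C) : |⨆ j, x j| ≤ C := by
  rw [abs_le]
  refine ⟨?_, Real.iSup_le (fun j => (abs_le.mp (hx j)).2) hC⟩
  rcases isEmpty_or_nonempty ι with _ | ⟨⟨j⟩⟩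
  · rw [Real.iSup_of_isEmpty]; linarith
  · exact (abs_le.mp (hx j)).1.trans (le_ciSup (Finite.bddAbove_range x) j)

lemma Bornology.IsBounded.range_iSup_apply {α ι : Type*} [Fintype ι]
    {f : α → EuclideanSpace ℝ ι} (hf : Bornology.IsBounded (range f)) :
    Bornology.IsBounded (range fun z => ⨆ j, f z j) := by
  obtain ⟨C, hC⟩ := isBounded_iff_forall_norm_le.mp hf
  refine isBounded_iff_forall_norm_le.mpr ⟨max C 0, ?_⟩
  rintro _ ⟨z, rfl⟩
  exact abs_iSup_le (le_max_right C 0) fun j =>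
    ((PiLp.norm_apply_le (f z) j).trans (hC _ (mem_range_self z))).trans (le_max_left C 0)

noncomputable def hopfLax {ι : Type*} (g c : ι → ℝ) (t : ℝ) : ℝ :=
  ⨅ z, g z + c z / t

namespace hopfLax

variable {ι : Type*} {g c : ι → ℝ} {s t : ℝ}

lemma bddBelow_range (hg : BddBelow (range g)) (hc : 0 ≤ c) (ht : 0 ≤ t) :
    BddBelow (range fun z => g z + c z / t) := by
  obtain ⟨m, hm⟩ := hg
  refine ⟨m, ?_⟩
  rintro _ ⟨z, rfl⟩
  have := hm (mem_range_self z)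
  have : 0 ≤ c z / t := div_nonneg (hc z) ht
  linarith

lemma le_add_div (hg : BddBelow (range g)) (hc : 0 ≤ c) (ht : 0 ≤ t) (z : ι) :
    hopfLax g c t ≤ g z + c z / t :=
  ciInf_le (bddBelow_range hg hc ht) z

lemma le_iSup (hg : BddBelow (range g)) (hg' : BddAbove (range g)) (hc : 0 ≤ c)
    {z₀ : ι} (hz₀ : c z₀ = 0) (ht : 0 ≤ t) : hopfLax g c t ≤ ⨆ z, g z :=
  calc hopfLax g c t ≤ g z₀ + c z₀ / t := le_add_div hg hc ht z₀
    _ = g z₀ := by rw [hz₀, zero_div, add_zero]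
    _ ≤ ⨆ z, g z := le_ciSup hg' z₀

lemma antitoneOn [Nonempty ι] (hg : BddBelow (range g)) (hc : 0 ≤ c) :
    AntitoneOn (hopfLax g c) (Ioi 0) := fun s hs t _ hst =>
  le_ciInf fun z => (le_add_div hg hc (le_of_lt hs |>.trans hst) z).trans <| by
    gcongr
    exact hc z

lemma sub_le {δ : ℝ} (hg : BddBelow (range g)) (hg' : BddAbove (range g)) (hc : 0 ≤ c)
    {z₀ : ι} (hz₀ : c z₀ = 0) (hδ : 0 < δ) (hδs : δ < s) (hst : s ≤ t) :
    hopfLax g c s - hopfLax g c t ≤ ((⨆ z, g z) - ⨅ z, g z) / δ * (t - s) := by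
  have hs : 0 < s := hδ.trans hδs
  have ht : 0 < t := hs.trans_le hst
  have : Nonempty ι := ⟨z₀⟩
  set osc := (⨆ z, g z) - ⨅ z, g z
  have hosc : 0 ≤ osc := sub_nonneg.mpr ((ciInf_le hg z₀).trans (le_ciSup hg' z₀))
  have hgap : 0 ≤ osc / δ * (t - s) := mul_nonneg (div_nonneg hosc hδ.le) (by linarith)
  rw [sub_le_comm]
  refine le_ciInf fun z => ?_
  rcases le_or_gt (c z / t) osc with hcz | hcz
  · have hsplit : c z / s = c z / t + c z / t * ((t - s) / s) := by field_simp; ring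
    have hratio : (t - s) / s ≤ (t - s) / δ :=
      div_le_div_of_nonneg_left (by linarith) hδ hδs.le
    have : c z / t * ((t - s) / s) ≤ osc / δ * (t - s) :=
      calc c z / t * ((t - s) / s) ≤ osc * ((t - s) / δ) :=
            mul_le_mul hcz hratio (div_nonneg (by linarith) hs.le) hosc
        _ = osc / δ * (t - s) := by ring
    linarith [le_add_div hg hc hs.le z]
  · linarith [le_iSup hg hg' hc hz₀ hs.le, ciInf_le hg z]

lemma abs_sub_le {δ : ℝ} (hg : BddBelow (range g)) (hg' : BddAbove (range g)) (hc : 0 ≤ c)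
    {z₀ : ι} (hz₀ : c z₀ = 0) (hδ : 0 < δ) (hs : δ < s) (ht : δ < t) :
    |hopfLax g c t - hopfLax g c s| ≤ ((⨆ z, g z) - ⨅ z, g z) / δ * |s - t| := by
  have : Nonempty ι := ⟨z₀⟩
  have hpos : ∀ {r}, δ < r → r ∈ Ioi (0 : ℝ) := fun hr => hδ.trans hr
  rcases le_total s t with hst | hts
  · rw [abs_of_nonpos (sub_nonpos.mpr (antitoneOn hg hc (hpos hs) (hpos ht) hst)),
      abs_of_nonpos (sub_nonpos.mpr hst), neg_sub, neg_sub]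
    exact sub_le hg hg' hc hz₀ hδ hs hst
  · rw [abs_of_nonneg (sub_nonneg.mpr (antitoneOn hg hc (hpos ht) (hpos hs) hts)),
      abs_of_nonneg (sub_nonneg.mpr hts)]
    exact sub_le hg hg' hc hz₀ hδ ht hts

end hopfLax

lemma iQ_eq_hopfLax {κ : ℕ} (Y : Set (EuclideanSpace ℝ (Fin κ)))
    (π : EuclideanSpace ℝ (Fin κ) → Y) (f : Y → EuclideanSpace ℝ (Fin κ)) (t : ℝ) (y : Y) :
    iQ Y π f t y = hopfLax (fun z => ⨆ j, f z j)
      (fun z => Metric.infDist (f z) (π ⁻¹' {y}) ^ 2 / 2) t := by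
  simp only [iQ, hlF, hopfLax, div_div]

theorem stmt_2_general (κ : ℕ)
    (Y : Set (EuclideanSpace ℝ (Fin κ)))
    (π : EuclideanSpace ℝ (Fin κ) → Y)
    (f : Y → EuclideanSpace ℝ (Fin κ))
    (hfb : Bornology.IsBounded (Set.range f)) (hsec : ∀ y : Y, π (f y) = y)

    (y : Y) (δ : ℝ) (hδ : 0 < δ) :
    ∀ s t : ℝ, s ∈ Set.Ioi δ → t ∈ Set.Ioi δ →
      |iQ Y π f t y - iQ Y π f s y| ≤
        (((⨆ z : Y, ⨆ j, f z j) - (⨅ z : Y, ⨆ j, f z j)) / δ) * |s - t| := by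
  intro s t hs ht
  have hg := hfb.range_iSup_apply
  have hc : 0 ≤ fun z => Metric.infDist (f z) (π ⁻¹' {y}) ^ 2 / 2 := fun z => by positivity
  have hy : Metric.infDist (f y) (π ⁻¹' {y}) ^ 2 / 2 = 0 := by
    rw [Metric.infDist_zero_of_mem (by simp [hsec y])]; norm_num
  rw [iQ_eq_hopfLax, iQ_eq_hopfLax]
  exact hopfLax.abs_sub_le hg.bddBelow hg.bddAbove hc hy hδ hs ht

theorem stmt_2 (κ : ℕ) (hκ : 1 ≤ κ)
    (Y : Set (EuclideanSpace ℝ (Fin κ))) (hY : Y.Nonempty) (hYb : Bornology.IsBounded Y)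
    (π : EuclideanSpace ℝ (Fin κ) → Y) (hπc : Continuous π) (hπo : IsOpenMap π)
    (hπs : Function.Surjective π)
    (f : Y → EuclideanSpace ℝ (Fin κ)) (hfc : Continuous f)
    (hfb : Bornology.IsBounded (Set.range f)) (hsec : ∀ y : Y, π (f y) = y)

    (y : Y) (δ : ℝ) (hδ : 0 < δ) :
    ∀ s t : ℝ, s ∈ Set.Ioi δ → t ∈ Set.Ioi δ →
      |iQ Y π f t y - iQ Y π f s y| ≤
        (((⨆ z : Y, ⨆ j, f z j) - (⨅ z : Y, ⨆ j, f z j)) / δ) * |s - t| :=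
  stmt_2_general κ Y π f hfb hsec y δ hδ
end

section
/- Let f be a bounded continuous section of π, let (y_n) be a sequence in Y converging to y ∈ Y, and let (t_n) ⊂ (0, ∞) converge to t > 0. Then iD⁺f(y, t) ≥ limsup_{n → ∞} iD⁺f(y_n, t_n). -/
open Metric Set Filter Topology MeasureTheory

/-- Auxiliary: the set whose supremum is `iDp`. -/
def minSet {κ : ℕ} (Y : Set (EuclideanSpace ℝ (Fin κ)))
    (π : EuclideanSpace ℝ (Fin κ) → Y) (f : Y → EuclideanSpace ℝ (Fin κ))
    (y : Y) (t : ℝ) : Set ℝ :=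
  { a : ℝ | ∃ u : ℕ → Y, IsMinSeq Y π f t y u ∧
    a = Filter.limsup (fun n => Metric.infDist (f (u n)) (π ⁻¹' {y})) Filter.atTop }

lemma iDp_eq_sSup {κ : ℕ} (Y : Set (EuclideanSpace ℝ (Fin κ)))
    (π : EuclideanSpace ℝ (Fin κ) → Y) (f : Y → EuclideanSpace ℝ (Fin κ))
    (y : Y) (t : ℝ) : iDp Y π f y t = sSup (minSet Y π f y t) := rfl

lemma coord_abs_le_norm {κ : ℕ} (x : EuclideanSpace ℝ (Fin κ)) (j : Fin κ) :
    |x j| ≤ ‖x‖ := by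
  rw [EuclideanSpace.norm_eq, ← Real.sqrt_sq_eq_abs]
  apply Real.sqrt_le_sqrt
  have h := Finset.single_le_sum (f := fun i => ‖x i‖ ^ 2)
    (fun i _ => by positivity) (Finset.mem_univ j)
  simpa [Real.norm_eq_abs, sq_abs] using h

set_option maxHeartbeats 4000000 in
theorem stmt_6 (κ : ℕ) (hκ : 1 ≤ κ)
    (Y : Set (EuclideanSpace ℝ (Fin κ))) (hY : Y.Nonempty) (hYb : Bornology.IsBounded Y)
    (π : EuclideanSpace ℝ (Fin κ) → Y) (hπc : Continuous π) (hπo : IsOpenMap π)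
    (hπs : Function.Surjective π)
    (f : Y → EuclideanSpace ℝ (Fin κ)) (hfc : Continuous f)
    (hfb : Bornology.IsBounded (Set.range f)) (hsec : ∀ y : Y, π (f y) = y)

    (u : ℕ → Y) (y : Y) (hu : Filter.Tendsto u Filter.atTop (nhds y))
    (ts : ℕ → ℝ) (hts : ∀ n, 0 < ts n) (t : ℝ) (ht : 0 < t)
    (htt : Filter.Tendsto ts Filter.atTop (nhds t)) :
    Filter.limsup (fun n => iDp Y π f (u n) (ts n)) Filter.atTop ≤ iDp Y π f y t := by
    classical
  have hFinNe : Nonempty (Fin κ) := ⟨⟨0, hκ⟩⟩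
  have hYne : Nonempty Y := hY.to_subtype
  obtain ⟨C, hC⟩ := hfb.exists_norm_le
  have hCz : ∀ z : Y, ‖f z‖ ≤ C := fun z => hC _ (mem_range_self z)
  have hC0 : 0 ≤ C := le_trans (norm_nonneg _) (hCz y)
  have hfib : ∀ y' : Y, f y' ∈ π ⁻¹' {y'} := fun y' => by
    simp [Set.mem_preimage, hsec y']
  have hfibne : ∀ y' : Y, (π ⁻¹' {y'} : Set (EuclideanSpace ℝ (Fin κ))).Nonempty :=
    fun y' => ⟨f y', hfib y'⟩
  -- distance bound
  have hDle : ∀ (x : EuclideanSpace ℝ (Fin κ)), ‖x‖ ≤ C → ∀ y' : Y,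
      Metric.infDist x (π ⁻¹' {y'}) ≤ 2 * C := by
    intro x hx y'
    refine le_trans (Metric.infDist_le_dist_of_mem (hfib y')) ?_
    calc dist x (f y') ≤ ‖x‖ + ‖f y'‖ := dist_le_norm_add_norm x (f y')
    _ ≤ 2 * C := by linarith [hCz y']
  have hDz : ∀ (z y' : Y), Metric.infDist (f z) (π ⁻¹' {y'}) ≤ 2 * C :=
    fun z y' => hDle (f z) (hCz z) y'
  -- sup-coordinate bounds
  have hMub : ∀ z : Y, (⨆ j, f z j) ≤ C := by
    intro z
    exact ciSup_le fun j => le_trans (le_abs_self _)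
      (le_trans (coord_abs_le_norm (f z) j) (hCz z))
  have hMlb : ∀ z : Y, -C ≤ (⨆ j, f z j) := by
    intro z
    refine le_trans ?_ (le_ciSup (Set.Finite.bddAbove (Set.finite_range _)) ⟨0, hκ⟩)
    have h1 : |f z ⟨0, hκ⟩| ≤ C := le_trans (coord_abs_le_norm (f z) _) (hCz z)
    have := neg_abs_le (f z ⟨0, hκ⟩)
    linarith
  -- hlF bounds
  have hlFlb : ∀ (t' : ℝ), 0 < t' → ∀ (y' z : Y), -C ≤ hlF Y π f t' y' z := by
    intro t' ht' y' z
    have h1 : 0 ≤ (Metric.infDist (f z) (π ⁻¹' {y'}))^2 / (2*t') := by positivity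
    have := hMlb z
    show -C ≤ (⨆ j, f z j) + (Metric.infDist (f z) (π ⁻¹' {y'}))^2 / (2*t')
    linarith
  have hbb : ∀ (t' : ℝ), 0 < t' → ∀ (y' : Y),
      BddBelow (Set.range fun z : Y => hlF Y π f t' y' z) := by
    intro t' ht' y'
    exact ⟨-C, by rintro a ⟨z, rfl⟩; exact hlFlb t' ht' y' z⟩
  have hiQle : ∀ (t' : ℝ), 0 < t' → ∀ (y' z : Y), iQ Y π f t' y' ≤ hlF Y π f t' y' z :=
    fun t' ht' y' z => ciInf_le (hbb t' ht' y') z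
  -- existence of minimizing sequences
  have hminseq : ∀ (t' : ℝ), 0 < t' → ∀ (y' : Y), ∃ v : ℕ → Y, IsMinSeq Y π f t' y' v := by
    intro t' ht' y'
    have hne : (Set.range fun z : Y => hlF Y π f t' y' z).Nonempty := Set.range_nonempty _
    obtain ⟨g, -, hgt, hgmem⟩ := exists_seq_tendsto_sInf hne (hbb t' ht' y')
    choose v hv using hgmem
    refine ⟨v, ?_⟩
    show Filter.Tendsto (fun n => hlF Y π f t' y' (v n)) atTop (𝓝 (iQ Y π f t' y'))
    have h1 : (fun n => hlF Y π f t' y' (v n)) = g := funext hv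
    have h2 : iQ Y π f t' y' = sInf (Set.range fun z : Y => hlF Y π f t' y' z) := by
      rw [iQ, sInf_range]
    rw [h1, h2]
    exact hgt
  -- minSet facts
  have hSbdd : ∀ (y' : Y) (t' : ℝ), BddAbove (minSet Y π f y' t') := by
    intro y' t'
    refine ⟨2*C, ?_⟩
    rintro a ⟨v, hv, rfl⟩
    refine Filter.limsup_le_of_le (isCoboundedUnder_le_of_le atTop
      (fun m => Metric.infDist_nonneg)) ?_
    exact Filter.Eventually.of_forall fun m => hDz (v m) y'
  have hSne : ∀ (t' : ℝ), 0 < t' → ∀ (y' : Y), (minSet Y π f y' t').Nonempty := by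
    intro t' ht' y'
    obtain ⟨v, hv⟩ := hminseq t' ht' y'
    exact ⟨_, v, hv, rfl⟩
  have hiDp0 : ∀ (t' : ℝ), 0 < t' → ∀ (y' : Y), 0 ≤ iDp Y π f y' t' := by
    intro t' ht' y'
    obtain ⟨v, hv⟩ := hminseq t' ht' y'
    have hAin : Filter.limsup (fun m => Metric.infDist (f (v m)) (π ⁻¹' {y'})) atTop
        ∈ minSet Y π f y' t' := ⟨v, hv, rfl⟩
    have h0 : (0:ℝ) ≤ Filter.limsup (fun m => Metric.infDist (f (v m)) (π ⁻¹' {y'})) atTop := by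
      refine Filter.le_limsup_of_frequently_le
        (Filter.Frequently.of_forall fun m => Metric.infDist_nonneg) ?_
      exact Filter.isBoundedUnder_of ⟨2*C, fun m => hDz (v m) y'⟩
    exact h0.trans (le_csSup (hSbdd y' t') hAin)
  -- U2: openness direction
  have hU2 : ∀ ε : ℝ, 0 < ε → ∀ᶠ n in atTop,
      ∀ x ∈ Metric.closedBall (0 : EuclideanSpace ℝ (Fin κ)) C,
        Metric.infDist x (π ⁻¹' {u n}) ≤ Metric.infDist x (π ⁻¹' {y}) + ε := by
    intro ε hε
    set r : ℝ := min (ε/4) 1 with hr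
    have hr0 : 0 < r := by positivity
    have hr1 : r ≤ 1 := min_le_right _ _
    have hrε : r ≤ ε/4 := min_le_left _ _
    set R : ℝ := 3*C + 1 with hR
    -- openness: around each fiber point, nearby fibers have nearby points
    have hop : ∀ p : ↥(π ⁻¹' {y} : Set (EuclideanSpace ℝ (Fin κ))),
        ∃ δp : ℝ, 0 < δp ∧ ∀ y' : Y, dist y' y < δp →
          ∃ q, dist q (p : EuclideanSpace ℝ (Fin κ)) < ε/4 ∧ π q = y' := by
      rintro ⟨p, hp⟩
      have hpy : π p = y := hp
      have hOopen : IsOpen (π '' Metric.ball p (ε/4)) := hπo _ Metric.isOpen_ball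
      have hyO : y ∈ π '' Metric.ball p (ε/4) :=
        ⟨p, Metric.mem_ball_self (by positivity), hpy⟩
      obtain ⟨δp, hδp0, hδball⟩ := Metric.isOpen_iff.mp hOopen y hyO
      refine ⟨δp, hδp0, fun y' hy' => ?_⟩
      have : y' ∈ π '' Metric.ball p (ε/4) := hδball (Metric.mem_ball.mpr hy')
      obtain ⟨q, hq, hqy⟩ := this
      exact ⟨q, Metric.mem_ball.mp hq, hqy⟩
    choose δp hδp0 hδp using hop
    -- compact truncated fiber and finite subcover
    have hPclosed : IsClosed (π ⁻¹' {y} : Set (EuclideanSpace ℝ (Fin κ))) :=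
      (isClosed_singleton).preimage hπc
    have hPcomp : IsCompact ((π ⁻¹' {y} : Set (EuclideanSpace ℝ (Fin κ)))
        ∩ Metric.closedBall 0 R) :=
      (isCompact_closedBall (0 : EuclideanSpace ℝ (Fin κ)) R).inter_left hPclosed
    have hcov : ((π ⁻¹' {y} : Set (EuclideanSpace ℝ (Fin κ))) ∩ Metric.closedBall 0 R)
        ⊆ ⋃ i : ↥(π ⁻¹' {y} : Set (EuclideanSpace ℝ (Fin κ))),
          Metric.ball (i : EuclideanSpace ℝ (Fin κ)) (ε/4) := by
      rintro p ⟨hp1, _⟩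
      exact Set.mem_iUnion.mpr ⟨⟨p, hp1⟩, Metric.mem_ball_self (by positivity)⟩
    obtain ⟨s, hs⟩ := hPcomp.elim_finite_subcover _ (fun i => Metric.isOpen_ball) hcov
    have hfyP : f y ∈ (π ⁻¹' {y} : Set (EuclideanSpace ℝ (Fin κ))) ∩ Metric.closedBall 0 R := by
      refine ⟨hfib y, ?_⟩
      rw [Metric.mem_closedBall, dist_zero_right]
      have := hCz y; linarith
    obtain ⟨i₀, hi₀, -⟩ := Set.mem_iUnion₂.mp (hs hfyP)
    have hsne : s.Nonempty := ⟨i₀, hi₀⟩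
    set δ : ℝ := s.inf' hsne δp with hδ
    have hδ0 : 0 < δ := by
      rw [hδ, Finset.lt_inf'_iff]
      exact fun i _ => hδp0 i
    -- eventual closeness of `u n` to `y`
    have hev : ∀ᶠ n in atTop, dist (u n) y < δ := by
      have := Metric.tendsto_nhds.mp hu δ hδ0
      exact this
    filter_upwards [hev] with n hn
    intro x hx
    have hxn : ‖x‖ ≤ C := by
      rwa [Metric.mem_closedBall, dist_zero_right] at hx
    -- choose a near-minimizer p in the fiber over y
    have hlt : Metric.infDist x (π ⁻¹' {y}) < Metric.infDist x (π ⁻¹' {y}) + r :=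
      lt_add_of_pos_right _ hr0
    obtain ⟨p, hpfib, hpd⟩ := (Metric.infDist_lt_iff (hfibne y)).mp hlt
    have hpR : p ∈ Metric.closedBall (0 : EuclideanSpace ℝ (Fin κ)) R := by
      rw [Metric.mem_closedBall, dist_zero_right]
      have h1 : ‖p‖ ≤ ‖x‖ + ‖p - x‖ := by
        calc ‖p‖ = ‖x + (p - x)‖ := by rw [add_sub_cancel]
        _ ≤ ‖x‖ + ‖p - x‖ := norm_add_le _ _
      have h2 : ‖p - x‖ = dist x p := by rw [dist_eq_norm, norm_sub_rev]
      have h3 : Metric.infDist x (π ⁻¹' {y}) ≤ 2*C := hDle x hxn y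
      rw [hR]; rw [h2] at h1; linarith
    obtain ⟨i, his, hpi⟩ := Set.mem_iUnion₂.mp (hs ⟨hpfib, hpR⟩)
    have hdist_i : dist p (i : EuclideanSpace ℝ (Fin κ)) < ε/4 := Metric.mem_ball.mp hpi
    have hδi : δ ≤ δp i := Finset.inf'_le _ his
    obtain ⟨q, hqi, hqy⟩ := hδp i (u n) (lt_of_lt_of_le hn hδi)
    have hqfib : q ∈ (π ⁻¹' {u n} : Set (EuclideanSpace ℝ (Fin κ))) := by
      simp [Set.mem_preimage, hqy]
    calc Metric.infDist x (π ⁻¹' {u n}) ≤ dist x q := Metric.infDist_le_dist_of_mem hqfib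
    _ ≤ dist x p + dist p (i : EuclideanSpace ℝ (Fin κ))
        + dist (i : EuclideanSpace ℝ (Fin κ)) q := dist_triangle4 _ _ _ _
    _ ≤ (Metric.infDist x (π ⁻¹' {y}) + r) + ε/4 + ε/4 := by
        have := dist_comm (i : EuclideanSpace ℝ (Fin κ)) q ▸ hqi
        have h5 : dist (i : EuclideanSpace ℝ (Fin κ)) q < ε/4 := by
          rw [dist_comm]; exact hqi
        linarith [le_of_lt hpd]
    _ ≤ Metric.infDist x (π ⁻¹' {y}) + ε := by linarith
  -- U1: continuity direction
  have hU1 : ∀ ε : ℝ, 0 < ε → ∀ᶠ n in atTop,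
      ∀ x ∈ Metric.closedBall (0 : EuclideanSpace ℝ (Fin κ)) C,
        Metric.infDist x (π ⁻¹' {y}) ≤ Metric.infDist x (π ⁻¹' {u n}) + ε := by
    intro ε hε
    by_contra hcon
    rw [Filter.not_eventually] at hcon
    obtain ⟨φ, hφ, hφP⟩ := Filter.extraction_of_frequently_atTop hcon
    have hφP' : ∀ k, ∃ x ∈ Metric.closedBall (0 : EuclideanSpace ℝ (Fin κ)) C,
        Metric.infDist x (π ⁻¹' {u (φ k)}) + ε < Metric.infDist x (π ⁻¹' {y}) := by
      intro k
      have := hφP k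
      push_neg at this
      obtain ⟨x, hx1, hx2⟩ := this
      exact ⟨x, hx1, hx2⟩
    choose x hxK hxlt using hφP'
    have hxn : ∀ k, ‖x k‖ ≤ C := by
      intro k
      have := hxK k
      rwa [Metric.mem_closedBall, dist_zero_right] at this
    have hpex : ∀ k, ∃ p ∈ (π ⁻¹' {u (φ k)} : Set (EuclideanSpace ℝ (Fin κ))),
        dist (x k) p < Metric.infDist (x k) (π ⁻¹' {u (φ k)}) + ε/2 := by
      intro k
      exact (Metric.infDist_lt_iff (hfibne (u (φ k)))).mp (lt_add_of_pos_right _ (by positivity))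
    choose p hpfib hpd using hpex
    set R : ℝ := 3*C + ε with hR
    have hpR : ∀ k, p k ∈ Metric.closedBall (0 : EuclideanSpace ℝ (Fin κ)) R := by
      intro k
      rw [Metric.mem_closedBall, dist_zero_right]
      have h1 : ‖p k‖ ≤ ‖x k‖ + ‖p k - x k‖ := by
        calc ‖p k‖ = ‖x k + (p k - x k)‖ := by rw [add_sub_cancel]
        _ ≤ ‖x k‖ + ‖p k - x k‖ := norm_add_le _ _
      have h2 : ‖p k - x k‖ = dist (x k) (p k) := by rw [dist_eq_norm, norm_sub_rev]
      have h3 : Metric.infDist (x k) (π ⁻¹' {u (φ k)}) ≤ 2*C := hDle (x k) (hxn k) _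
      have h4 := hpd k
      have h5 := hxn k
      rw [hR]; rw [h2] at h1; linarith
    -- extract convergent subsequence of (x k, p k)
    have hcomp : IsCompact ((Metric.closedBall (0 : EuclideanSpace ℝ (Fin κ)) C) ×ˢ
        (Metric.closedBall (0 : EuclideanSpace ℝ (Fin κ)) R)) :=
      (isCompact_closedBall _ _).prod (isCompact_closedBall _ _)
    obtain ⟨⟨xb, pb⟩, -, σ, hσ, hgt⟩ := hcomp.tendsto_subseq
      (x := fun k => (x k, p k)) (fun k => Set.mk_mem_prod (hxK k) (hpR k))
    have hxt : Filter.Tendsto (fun k => x (σ k)) atTop (𝓝 xb) :=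
      (continuous_fst.tendsto _).comp hgt
    have hpt : Filter.Tendsto (fun k => p (σ k)) atTop (𝓝 pb) :=
      (continuous_snd.tendsto _).comp hgt
    -- identify the limit fiber
    have hπp : Filter.Tendsto (fun k => π (p (σ k))) atTop (𝓝 (π pb)) :=
      (hπc.tendsto _).comp hpt
    have hπeq : ∀ k, π (p (σ k)) = u (φ (σ k)) := fun k => hpfib (σ k)
    have huσ : Filter.Tendsto (fun k => u (φ (σ k))) atTop (𝓝 y) :=
      hu.comp ((hφ.comp hσ).tendsto_atTop)
    have hπpb : π pb = y := by
      refine tendsto_nhds_unique ?_ huσ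
      convert hπp using 1
      exact funext fun k => (hπeq k).symm
    have hpbfib : pb ∈ (π ⁻¹' {y} : Set (EuclideanSpace ℝ (Fin κ))) := by
      simp [Set.mem_preimage, hπpb]
    -- pass to the limit in the inequality
    have hAt : Filter.Tendsto (fun k => Metric.infDist (x (σ k)) (π ⁻¹' {y})) atTop
        (𝓝 (Metric.infDist xb (π ⁻¹' {y}))) :=
      ((Metric.continuous_infDist_pt _).tendsto _).comp hxt
    have hBt : Filter.Tendsto (fun k => dist (x (σ k)) (p (σ k)) + ε/2) atTop
        (𝓝 (dist xb pb + ε/2)) :=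
      (hxt.dist hpt).add tendsto_const_nhds
    have hineq : ∀ k, dist (x (σ k)) (p (σ k)) + ε/2 ≤
        Metric.infDist (x (σ k)) (π ⁻¹' {y}) := by
      intro k
      have h1 := hpd (σ k)
      have h2 := hxlt (σ k)
      linarith
    have hlim : dist xb pb + ε/2 ≤ Metric.infDist xb (π ⁻¹' {y}) :=
      le_of_tendsto_of_tendsto' hBt hAt hineq
    have : Metric.infDist xb (π ⁻¹' {y}) ≤ dist xb pb :=
      Metric.infDist_le_dist_of_mem hpbfib
    linarith
  -- uniform distance comparison
  have habs : ∀ ε : ℝ, 0 < ε → ∀ᶠ n in atTop, ∀ z : Y,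
      |Metric.infDist (f z) (π ⁻¹' {u n}) - Metric.infDist (f z) (π ⁻¹' {y})| ≤ ε := by
    intro ε hε
    filter_upwards [hU1 ε hε, hU2 ε hε] with n h1 h2
    intro z
    have hzK : f z ∈ Metric.closedBall (0 : EuclideanSpace ℝ (Fin κ)) C := by
      rw [Metric.mem_closedBall, dist_zero_right]; exact hCz z
    have ha := h1 (f z) hzK
    have hb := h2 (f z) hzK
    rw [abs_le]
    constructor <;> linarith
  -- inverse time convergence
  have hqinv : ∀ ε : ℝ, 0 < ε → ∀ᶠ n in atTop, |(2 * ts n)⁻¹ - (2 * t)⁻¹| ≤ ε := by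
    intro ε hε
    have h2t : Filter.Tendsto (fun n => 2 * ts n) atTop (𝓝 (2*t)) := htt.const_mul 2
    have hinv : Filter.Tendsto (fun n => (2 * ts n)⁻¹) atTop (𝓝 ((2*t)⁻¹)) :=
      h2t.inv₀ (by positivity)
    have := Metric.tendsto_nhds.mp hinv ε hε
    filter_upwards [this] with n hn
    rw [Real.dist_eq] at hn
    exact hn.le
  -- uniform hlF comparison
  have hquant : ∀ ε : ℝ, 0 < ε → ∀ᶠ n in atTop, ∀ z : Y,
      |hlF Y π f (ts n) (u n) z - hlF Y π f t y z| ≤ ε := by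
    intro ε hε
    have hε₁ : (0:ℝ) < ε * t / (4*C + 4) := by positivity
    have hε₂ : (0:ℝ) < ε / (8*C^2 + 8) := by positivity
    filter_upwards [habs _ hε₁, hqinv _ hε₂] with n h1 h2
    intro z
    set a := Metric.infDist (f z) (π ⁻¹' {u n}) with hadef
    set b := Metric.infDist (f z) (π ⁻¹' {y}) with hbdef
    have ha0 : 0 ≤ a := Metric.infDist_nonneg
    have hb0 : 0 ≤ b := Metric.infDist_nonneg
    have haC : a ≤ 2*C := hDz z (u n)
    have hbC : b ≤ 2*C := hDz z y
    have hab : |a - b| ≤ ε * t / (4*C + 4) := h1 z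
    have hq : |(2 * ts n)⁻¹ - (2 * t)⁻¹| ≤ ε / (8*C^2 + 8) := h2
    have hdiff : hlF Y π f (ts n) (u n) z - hlF Y π f t y z
        = a^2 * (2 * ts n)⁻¹ - b^2 * (2 * t)⁻¹ := by
      show ((⨆ j, f z j) + a^2 / (2 * ts n)) - ((⨆ j, f z j) + b^2 / (2 * t))
          = a^2 * (2 * ts n)⁻¹ - b^2 * (2 * t)⁻¹
      rw [div_eq_mul_inv, div_eq_mul_inv]; ring
    clear_value a b
    rw [hdiff]
    have hsplit : a^2 * (2 * ts n)⁻¹ - b^2 * (2 * t)⁻¹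
        = (a^2 - b^2) * (2 * t)⁻¹ + a^2 * ((2 * ts n)⁻¹ - (2 * t)⁻¹) := by ring
    rw [hsplit]
    have h2t0 : (0:ℝ) < (2*t)⁻¹ := by positivity
    have habs1 : |(a^2 - b^2) * (2 * t)⁻¹| ≤ ε/2 := by
      rw [abs_mul, abs_of_pos h2t0]
      have h3 : |a^2 - b^2| ≤ (ε * t / (4*C + 4)) * (4*C) := by
        have he : a^2 - b^2 = (a - b) * (a + b) := by ring
        rw [he, abs_mul]
        have h4 : |a + b| ≤ 4*C := by
          rw [abs_of_nonneg (by linarith)]; linarith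
        exact mul_le_mul hab h4 (abs_nonneg _) (by positivity)
      have h7 : |a^2 - b^2| * (2*t)⁻¹ ≤ (ε * t / (4*C + 4)) * (4*C) * (2*t)⁻¹ :=
        mul_le_mul_of_nonneg_right h3 (le_of_lt h2t0)
      refine h7.trans ?_
      have h8 : (ε * t / (4*C + 4)) * (4*C) * (2*t)⁻¹ = ε * (4*C) * t / ((4*C+4) * (2*t)) := by
        field_simp
      rw [h8, div_le_div_iff₀ (by positivity) (by positivity : (0:ℝ) < 2)]
      nlinarith [mul_pos hε ht]
    have habs2 : |a^2 * ((2 * ts n)⁻¹ - (2 * t)⁻¹)| ≤ ε/2 := by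
      rw [abs_mul, abs_of_nonneg (by positivity : (0:ℝ) ≤ a^2)]
      have h4 : a^2 ≤ 4*C^2 := by
        calc a^2 ≤ (2*C)^2 := pow_le_pow_left₀ ha0 haC 2
        _ = 4*C^2 := by ring
      have h5 : |(2 * ts n)⁻¹ - (2 * t)⁻¹| ≤ ε / (8*C^2 + 8) := hq
      have h6 : (0:ℝ) ≤ |(2 * ts n)⁻¹ - (2 * t)⁻¹| := abs_nonneg _
      calc a^2 * |(2 * ts n)⁻¹ - (2 * t)⁻¹| ≤ 4*C^2 * (ε / (8*C^2 + 8)) :=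
            mul_le_mul h4 h5 h6 (by positivity)
      _ = ε * (4*C^2) / (8*C^2 + 8) := by ring
      _ ≤ ε/2 := by
          rw [div_le_div_iff₀ (by positivity) (by positivity : (0:ℝ) < 2)]
          nlinarith [hε.le]
    calc |(a^2 - b^2) * (2 * t)⁻¹ + a^2 * ((2 * ts n)⁻¹ - (2 * t)⁻¹)|
        ≤ |(a^2 - b^2) * (2 * t)⁻¹| + |a^2 * ((2 * ts n)⁻¹ - (2 * t)⁻¹)| := abs_add_le _ _
    _ ≤ ε/2 + ε/2 := add_le_add habs1 habs2
    _ = ε := by ring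
  -- continuity of iQ along the sequence
  have hiQd : ∀ ε : ℝ, 0 < ε → ∀ᶠ n in atTop,
      |iQ Y π f (ts n) (u n) - iQ Y π f t y| ≤ ε := by
    intro ε hε
    filter_upwards [hquant ε hε] with n hn
    have h1 : iQ Y π f (ts n) (u n) ≤ iQ Y π f t y + ε := by
      have hle : iQ Y π f (ts n) (u n) - ε ≤ iQ Y π f t y := by
        refine le_ciInf fun z => ?_
        have h2 := hiQle (ts n) (hts n) (u n) z
        have h3 := abs_le.mp (hn z)
        linarith [h3.1]
      linarith
    have h2 : iQ Y π f t y ≤ iQ Y π f (ts n) (u n) + ε := by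
      have hle : iQ Y π f t y - ε ≤ iQ Y π f (ts n) (u n) := by
        refine le_ciInf fun z => ?_
        have h2 := hiQle t ht y z
        have h3 := abs_le.mp (hn z)
        linarith [h3.2]
      linarith
    rw [abs_le]; constructor <;> linarith
  -- main diagonal argument
  set L := Filter.limsup (fun n => iDp Y π f (u n) (ts n)) Filter.atTop with hLdef
  have hcob : Filter.IsCoboundedUnder (· ≤ ·) atTop (fun n => iDp Y π f (u n) (ts n)) :=
    Filter.IsBoundedUnder.isCoboundedUnder_le
      (Filter.isBoundedUnder_of ⟨0, fun n => hiDp0 (ts n) (hts n) (u n)⟩)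
  have hη : ∀ k : ℕ, (0:ℝ) < 1/((k:ℝ)+1) := fun k => by positivity
  have hP : ∀ k : ℕ, ∃ n, (L - 1/((k:ℝ)+1) < iDp Y π f (u n) (ts n)) ∧
      (∀ z : Y, |Metric.infDist (f z) (π ⁻¹' {u n}) - Metric.infDist (f z) (π ⁻¹' {y})|
        ≤ 1/((k:ℝ)+1)) ∧
      (∀ z : Y, |hlF Y π f (ts n) (u n) z - hlF Y π f t y z| ≤ 1/((k:ℝ)+1)) ∧
      (|iQ Y π f (ts n) (u n) - iQ Y π f t y| ≤ 1/((k:ℝ)+1)) := by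
    intro k
    have hfreq : ∃ᶠ n in atTop, L - 1/((k:ℝ)+1) < iDp Y π f (u n) (ts n) :=
      Filter.frequently_lt_of_lt_limsup hcob (by linarith [hη k])
    exact (hfreq.and_eventually (((habs _ (hη k)).and ((hquant _ (hη k)).and
      (hiQd _ (hη k)))))).exists.imp (fun n ⟨h1, h2, h3, h4⟩ => ⟨h1, h2, h3, h4⟩)
  choose N hN1 hN2 hN3 hN4 using hP
  -- pick near-supremal elements of the minimizing sets
  have hSel : ∀ k : ℕ, ∃ a ∈ minSet Y π f (u (N k)) (ts (N k)), L - 2*(1/((k:ℝ)+1)) < a := by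
    intro k
    refine exists_lt_of_lt_csSup (hSne (ts (N k)) (hts (N k)) (u (N k))) ?_
    have h1 := hN1 k
    rw [iDp_eq_sSup] at h1
    linarith [hη k]
  choose a ha hagt using hSel
  have haS : ∀ k, ∃ v : ℕ → Y, IsMinSeq Y π f (ts (N k)) (u (N k)) v ∧
      a k = Filter.limsup (fun m => Metric.infDist (f (v m)) (π ⁻¹' {u (N k)})) atTop :=
    fun k => ha k
  choose v hvmin hvlim using haS
  -- pick diagonal indices
  have hm : ∀ k : ℕ, ∃ m,
      hlF Y π f (ts (N k)) (u (N k)) (v k m) ≤ iQ Y π f (ts (N k)) (u (N k)) + 1/((k:ℝ)+1) ∧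
      a k - 1/((k:ℝ)+1) < Metric.infDist (f (v k m)) (π ⁻¹' {u (N k)}) := by
    intro k
    have hev : ∀ᶠ m in atTop, hlF Y π f (ts (N k)) (u (N k)) (v k m)
        ≤ iQ Y π f (ts (N k)) (u (N k)) + 1/((k:ℝ)+1) :=
      (hvmin k).eventually_le_const (by linarith [hη k])
    have hcob2 : Filter.IsCoboundedUnder (· ≤ ·) atTop
        (fun m => Metric.infDist (f (v k m)) (π ⁻¹' {u (N k)})) :=
      Filter.IsBoundedUnder.isCoboundedUnder_le
        (Filter.isBoundedUnder_of ⟨0, fun m => Metric.infDist_nonneg⟩)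
    have hfr : ∃ᶠ m in atTop, a k - 1/((k:ℝ)+1)
        < Metric.infDist (f (v k m)) (π ⁻¹' {u (N k)}) := by
      refine Filter.frequently_lt_of_lt_limsup hcob2 ?_
      rw [← hvlim k]
      linarith [hη k]
    exact (hfr.and_eventually hev).exists.imp fun m ⟨h1, h2⟩ => ⟨h2, h1⟩
  choose m hm1 hm2 using hm
  set w : ℕ → Y := fun k => v k (m k) with hwdef
  have hm1' : ∀ k : ℕ,
      hlF Y π f (ts (N k)) (u (N k)) (w k) ≤ iQ Y π f (ts (N k)) (u (N k)) + 1/((k:ℝ)+1) :=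
    fun k => hm1 k
  have hm2' : ∀ k : ℕ,
      a k - 1/((k:ℝ)+1) < Metric.infDist (f (w k)) (π ⁻¹' {u (N k)}) := fun k => hm2 k
  clear_value w
  clear_value L
  -- w is a minimizing sequence for (y, t)
  have hone : Filter.Tendsto (fun k : ℕ => 1/((k:ℝ)+1)) atTop (𝓝 0) :=
    tendsto_one_div_add_atTop_nhds_zero_nat
  have hwmin : IsMinSeq Y π f t y w := by
    show Filter.Tendsto (fun k => hlF Y π f t y (w k)) atTop (𝓝 (iQ Y π f t y))
    have hlow : ∀ k, iQ Y π f t y ≤ hlF Y π f t y (w k) := fun k => hiQle t ht y (w k)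
    have hupp : ∀ k, hlF Y π f t y (w k) ≤ iQ Y π f t y + 3*(1/((k:ℝ)+1)) := by
      intro k
      have h3 := abs_le.mp (hN3 k (w k))
      have h4 := abs_le.mp (hN4 k)
      have h5 := hm1' k
      linarith [h3.1, h3.2, h4.1, h4.2]
    refine tendsto_of_tendsto_of_tendsto_of_le_of_le
      (tendsto_const_nhds : Filter.Tendsto (fun _ : ℕ => iQ Y π f t y) atTop _)
      ?_ hlow hupp
    have h6 := hone.const_mul (3:ℝ)
    rw [mul_zero] at h6
    have h7 := (tendsto_const_nhds (x := iQ Y π f t y) (f := atTop (α := ℕ))).add h6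
    rw [add_zero] at h7
    exact h7
  -- the limsup along w dominates L
  have hDlow : ∀ k : ℕ, L - 4*(1/((k:ℝ)+1)) ≤ Metric.infDist (f (w k)) (π ⁻¹' {y}) := by
    intro k
    have h2 := abs_le.mp (hN2 k (w k))
    have h5 := hm2' k
    have h6 := hagt k
    linarith [h2.1, h2.2]
  have hLleA : L ≤ Filter.limsup (fun k => Metric.infDist (f (w k)) (π ⁻¹' {y})) atTop := by
    have hconv : Filter.Tendsto (fun k : ℕ => L - 4*(1/((k:ℝ)+1))) atTop (𝓝 L) := by
      have h7 := hone.const_mul (4:ℝ)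
      rw [mul_zero] at h7
      have h8 := (tendsto_const_nhds (x := L) (f := atTop (α := ℕ))).sub h7
      rw [sub_zero] at h8
      exact h8
    calc L = Filter.limsup (fun k : ℕ => L - 4*(1/((k:ℝ)+1))) atTop := hconv.limsup_eq.symm
    _ ≤ Filter.limsup (fun k => Metric.infDist (f (w k)) (π ⁻¹' {y})) atTop := by
        refine Filter.limsup_le_limsup (Filter.Eventually.of_forall hDlow) ?_ ?_
        · refine Filter.IsBoundedUnder.isCoboundedUnder_le
            (Filter.isBoundedUnder_of ⟨L - 4, fun k => ?_⟩)
          have := hη k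
          have h8 : (1:ℝ)/((k:ℝ)+1) ≤ 1 := by
            rw [div_le_one (by positivity)]
            linarith [Nat.cast_nonneg (α := ℝ) k]
          show L - 4*(1/((k:ℝ)+1)) ≥ L - 4
          linarith
        · exact Filter.isBoundedUnder_of ⟨2*C, fun k => hDz (w k) y⟩
  have hAin : Filter.limsup (fun k => Metric.infDist (f (w k)) (π ⁻¹' {y})) atTop
      ∈ minSet Y π f y t := ⟨w, hwmin, rfl⟩
  rw [iDp_eq_sSup]
  exact hLleA.trans (le_csSup (hSbdd y t) hAin)
end

section
/- For every bounded continuous section f of π and every y ∈ Y, the map t ↦ iD⁻f(y, t) is left continuous on (0, ∞) and the map t ↦ iD⁺f(y, t) is right continuous on (0, ∞). -/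
open Metric Set Filter Topology MeasureTheory

/-!
Put `a z = max_j f_j(z)`, `c z = d(f(z), π⁻¹(y))` and `λ = 1/(2t)`. Then `iQ_t f(y)` is an
infimum of the affine functions `λ ↦ a z + λ c(z)²`, hence concave in `λ`, and almost minimizers
are controlled by its chord slopes `s(x, y)`: for `x < y`, minimizing sequences at `x` have
`limsup c ≤ √s(x, y)` and minimizing sequences at `y` have `liminf c ≥ √s(x, y)`. So
`iD⁻(x) ≤ iD⁺(x) ≤ √s(x, y) ≤ iD⁻(y)`, and both functions are nondecreasing.

For left continuity of `iD⁻` at `t`, take times `u m ↑ t`, put `δ m = λ(u m) - λ(u (m + 1))`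
and pick `z m` minimizing at `u m` up to `δ m ^ 2`. Comparing with the time `u (m + 1)` gives
`c(z m)² ≤ iD⁻(u (m + 1))² + δ m`, and `z` is a minimizing sequence at `t`; hence
`iD⁻(t) ≤ sup_{s < t} iD⁻(s)`. Right continuity of `iD⁺` is the mirror argument with `u m ↓ t`.
-/

section LimitBounds

variable {α : Type*} {l : Filter α} [l.NeBot] {w v : α → ℝ} {L : ℝ}

lemma limsup_le_of_le_of_tendsto (hw : IsBoundedUnder (· ≥ ·) l w) (h : ∀ n, w n ≤ v n)
    (hv : Tendsto v l (𝓝 L)) : limsup w l ≤ L :=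
  hv.limsup_eq ▸ limsup_le_limsup (Eventually.of_forall h) hw.isCoboundedUnder_le
    hv.isBoundedUnder_le

lemma le_liminf_of_le_of_tendsto (hw : IsBoundedUnder (· ≤ ·) l w) (h : ∀ n, v n ≤ w n)
    (hv : Tendsto v l (𝓝 L)) : L ≤ liminf w l :=
  hv.liminf_eq ▸ liminf_le_liminf (Eventually.of_forall h) hv.isBoundedUnder_ge
    hw.isCoboundedUnder_ge

lemma tendsto_sqrt_sq_add {δ : ℕ → ℝ} (hL : 0 ≤ L) (hδ : Tendsto δ atTop (𝓝 0)) :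
    Tendsto (fun m => √(L ^ 2 + δ m)) atTop (𝓝 L) := by
  have h := ((tendsto_const_nhds (x := L ^ 2)).add hδ).sqrt
  rwa [add_zero, Real.sqrt_sq hL] at h

end LimitBounds

lemma inv_two_mul_sub_pos {x y : ℝ} (hx : 0 < x) (hxy : x < y) : 0 < (2 * x)⁻¹ - (2 * y)⁻¹ :=
  sub_pos.2 (inv_strictAnti₀ (by positivity) (by linarith))

lemma tendsto_inv_two_mul_sub_succ {u : ℕ → ℝ} {t : ℝ} (ht : t ≠ 0)
    (hu : Tendsto u atTop (𝓝 t)) :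
    Tendsto (fun m => (2 * u m)⁻¹ - (2 * u (m + 1))⁻¹) atTop (𝓝 0) := by
  have h : Tendsto (fun m => (2 * u m)⁻¹) atTop (𝓝 (2 * t)⁻¹) :=
    (hu.const_mul 2).inv₀ (by positivity)
  simpa using h.sub ((tendsto_add_atTop_iff_nat 1).2 h)

lemma neg_norm_le_iSup_apply {n : Type*} [Fintype n] (x : EuclideanSpace ℝ n) :
    -‖x‖ ≤ ⨆ j, x j := by
  rcases isEmpty_or_nonempty n with _ | ⟨⟨j⟩⟩
  · simp
  · calc -‖x‖ ≤ x j :=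
        neg_le_of_abs_le ((Real.norm_eq_abs _).symm.trans_le (PiLp.norm_apply_le x j))
      _ ≤ ⨆ j, x j := le_ciSup (finite_range _).bddAbove j

namespace HopfLax

noncomputable section

variable {ι : Type*} (a c : ι → ℝ)

def cost (t : ℝ) (z : ι) : ℝ := a z + c z ^ 2 / (2 * t)

def value (t : ℝ) : ℝ := ⨅ z, cost a c t z

def IsMinimizingSeq (t : ℝ) (u : ℕ → ι) : Prop :=
  Tendsto (fun n => cost a c t (u n)) atTop (𝓝 (value a c t))

def upperDist (t : ℝ) : ℝ :=
  sSup {x | ∃ u, IsMinimizingSeq a c t u ∧ x = limsup (fun n => c (u n)) atTop}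

def lowerDist (t : ℝ) : ℝ :=
  sInf {x | ∃ u, IsMinimizingSeq a c t u ∧ x = liminf (fun n => c (u n)) atTop}

def chordSlope (x y : ℝ) : ℝ := (value a c x - value a c y) / ((2 * x)⁻¹ - (2 * y)⁻¹)

variable {a c} {C : ℝ}

lemma cost_sub_cost (x y : ℝ) (z : ι) :
    cost a c x z - cost a c y z = c z ^ 2 * ((2 * x)⁻¹ - (2 * y)⁻¹) := by
  simp only [cost, div_eq_mul_inv]; ring

lemma value_le_cost (ha : BddBelow (range a)) {t : ℝ} (ht : 0 ≤ t) (z : ι) :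
    value a c t ≤ cost a c t z := by
  refine ciInf_le ?_ z
  obtain ⟨A, hA⟩ := ha
  refine ⟨A, ?_⟩
  rintro _ ⟨w, rfl⟩
  exact (hA ⟨w, rfl⟩).trans (le_add_of_nonneg_right (by positivity))

lemma exists_cost_lt [Nonempty ι] (t : ℝ) {ε : ℝ} (hε : 0 < ε) :
    ∃ z, cost a c t z < value a c t + ε :=
  exists_lt_of_ciInf_lt (lt_add_of_pos_right _ hε)

lemma exists_isMinimizingSeq [Nonempty ι] (ha : BddBelow (range a)) {t : ℝ} (ht : 0 ≤ t) :
    ∃ u, IsMinimizingSeq a c t u := by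
  choose u hu using fun n : ℕ => exists_cost_lt (a := a) (c := c) t
    (show (0 : ℝ) < 1 / ((n : ℝ) + 1) by positivity)
  refine ⟨u, tendsto_of_tendsto_of_tendsto_of_le_of_le tendsto_const_nhds ?_
    (fun n => value_le_cost ha ht (u n)) (fun n => (hu n).le)⟩
  simpa using (tendsto_const_nhds (x := value a c t)).add tendsto_one_div_add_atTop_nhds_zero_nat

lemma value_le_value [Nonempty ι] (ha : BddBelow (range a)) {x y : ℝ} (hx : 0 < x)
    (hxy : x ≤ y) : value a c y ≤ value a c x := by
  refine le_ciInf fun z => (value_le_cost ha (hx.le.trans hxy) z).trans ?_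
  have hgap : 0 ≤ (2 * x)⁻¹ - (2 * y)⁻¹ := sub_nonneg.2 (inv_anti₀ (by positivity) (by linarith))
  linarith [cost_sub_cost (a := a) (c := c) x y z, mul_nonneg (sq_nonneg (c z)) hgap]

lemma chordSlope_nonneg [Nonempty ι] (ha : BddBelow (range a)) {x y : ℝ} (hx : 0 < x)
    (hxy : x < y) : 0 ≤ chordSlope a c x y :=
  div_nonneg (sub_nonneg.2 (value_le_value ha hx hxy.le)) (inv_two_mul_sub_pos hx hxy).le

lemma cost_le_cost_add (hc0 : ∀ z, 0 ≤ c z) (hcC : ∀ z, c z ≤ C) (x y : ℝ) (z : ι) :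
    cost a c x z ≤ cost a c y z + C ^ 2 * |(2 * x)⁻¹ - (2 * y)⁻¹| := by
  have hsq : c z ^ 2 ≤ C ^ 2 := pow_le_pow_left₀ (hc0 z) (hcC z) 2
  nlinarith [cost_sub_cost (a := a) (c := c) x y z, le_abs_self ((2 * x)⁻¹ - (2 * y)⁻¹),
    abs_nonneg ((2 * x)⁻¹ - (2 * y)⁻¹), sq_nonneg (c z)]

lemma value_le_value_add [Nonempty ι] (ha : BddBelow (range a)) (hc0 : ∀ z, 0 ≤ c z)
    (hcC : ∀ z, c z ≤ C) {x y : ℝ} (hx : 0 ≤ x) :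
    value a c x ≤ value a c y + C ^ 2 * |(2 * x)⁻¹ - (2 * y)⁻¹| := by
  rw [← sub_le_iff_le_add]
  exact le_ciInf fun z => sub_le_iff_le_add.2 <|
    (value_le_cost ha hx z).trans (cost_le_cost_add hc0 hcC x y z)

lemma isMinimizingSeq_of_tendsto [Nonempty ι] (ha : BddBelow (range a)) (hc0 : ∀ z, 0 ≤ c z)
    (hcC : ∀ z, c z ≤ C) {t : ℝ} (ht : 0 < t) {r η : ℕ → ℝ} {z : ℕ → ι} (hr0 : ∀ m, 0 < r m)
    (hr : Tendsto r atTop (𝓝 t)) (hη : Tendsto η atTop (𝓝 0))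
    (hz : ∀ m, cost a c (r m) (z m) ≤ value a c (r m) + η m) : IsMinimizingSeq a c t z := by
  have hgap : Tendsto (fun m => |(2 * t)⁻¹ - (2 * r m)⁻¹|) atTop (𝓝 0) := by
    have : Tendsto (fun m => (2 * r m)⁻¹) atTop (𝓝 (2 * t)⁻¹) :=
      (hr.const_mul 2).inv₀ (by positivity)
    simpa using (this.const_sub (2 * t)⁻¹).abs
  have hupper : ∀ m, cost a c t (z m) ≤
      value a c t + (η m + 2 * C ^ 2 * |(2 * t)⁻¹ - (2 * r m)⁻¹|) := by
    intro m
    have hcost := cost_le_cost_add (a := a) hc0 hcC t (r m) (z m)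
    have hvalue := value_le_value_add ha hc0 hcC (hr0 m).le (y := t)
    rw [abs_sub_comm] at hvalue
    linarith [hz m]
  refine tendsto_of_tendsto_of_tendsto_of_le_of_le tendsto_const_nhds ?_
    (fun m => value_le_cost ha ht.le _) hupper
  simpa using (tendsto_const_nhds (x := value a c t)).add (hη.add (hgap.const_mul (2 * C ^ 2)))

lemma sq_le_chordSlope_add (ha : BddBelow (range a)) {x y η : ℝ} (hx : 0 < x) (hxy : x < y)
    {z : ι} (hz : cost a c x z ≤ value a c x + η) :
    c z ^ 2 ≤ chordSlope a c x y + η / ((2 * x)⁻¹ - (2 * y)⁻¹) := by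
  rw [chordSlope, ← add_div, le_div_iff₀ (inv_two_mul_sub_pos hx hxy), ← cost_sub_cost]
  linarith [value_le_cost (c := c) ha (hx.trans hxy).le z]

lemma chordSlope_sub_le_sq (ha : BddBelow (range a)) {x y η : ℝ} (hx : 0 < x) (hxy : x < y)
    {z : ι} (hz : cost a c y z ≤ value a c y + η) :
    chordSlope a c x y - η / ((2 * x)⁻¹ - (2 * y)⁻¹) ≤ c z ^ 2 := by
  rw [chordSlope, ← sub_div, div_le_iff₀ (inv_two_mul_sub_pos hx hxy), ← cost_sub_cost]
  linarith [value_le_cost (c := c) ha hx.le z]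

lemma limsup_le_sqrt_chordSlope (ha : BddBelow (range a)) (hc0 : ∀ z, 0 ≤ c z) {x y : ℝ}
    (hx : 0 < x) (hxy : x < y) {u : ℕ → ι} (hu : IsMinimizingSeq a c x u) :
    limsup (fun n => c (u n)) atTop ≤ √(chordSlope a c x y) := by
  have hη : Tendsto (fun n => cost a c x (u n) - value a c x) atTop (𝓝 0) := by
    simpa using hu.sub_const (value a c x)
  refine limsup_le_of_le_of_tendsto (isBoundedUnder_of ⟨0, fun n => hc0 (u n)⟩)
    (fun n => Real.le_sqrt_of_sq_le (sq_le_chordSlope_add ha hx hxy (add_sub_cancel _ _).ge)) ?_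
  simpa using ((tendsto_const_nhds (x := chordSlope a c x y)).add (hη.div_const _)).sqrt

lemma sqrt_chordSlope_le_liminf (ha : BddBelow (range a)) (hc0 : ∀ z, 0 ≤ c z)
    (hcC : ∀ z, c z ≤ C) {x y : ℝ} (hx : 0 < x) (hxy : x < y) {u : ℕ → ι}
    (hu : IsMinimizingSeq a c y u) :
    √(chordSlope a c x y) ≤ liminf (fun n => c (u n)) atTop := by
  have hη : Tendsto (fun n => cost a c y (u n) - value a c y) atTop (𝓝 0) := by
    simpa using hu.sub_const (value a c y)
  refine le_liminf_of_le_of_tendsto (isBoundedUnder_of ⟨C, fun n => hcC (u n)⟩)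
    (fun n => (Real.sqrt_le_left (hc0 _)).2
      (chordSlope_sub_le_sq ha hx hxy (add_sub_cancel _ _).ge)) ?_
  simpa using ((tendsto_const_nhds (x := chordSlope a c x y)).sub (hη.div_const _)).sqrt

lemma liminf_comp_nonneg (hc0 : ∀ z, 0 ≤ c z) (hcC : ∀ z, c z ≤ C) (u : ℕ → ι) :
    0 ≤ liminf (fun n => c (u n)) atTop :=
  le_liminf_of_le_of_tendsto (isBoundedUnder_of ⟨C, fun n => hcC (u n)⟩) (fun n => hc0 (u n))
    tendsto_const_nhds

lemma limsup_comp_le (hc0 : ∀ z, 0 ≤ c z) (hcC : ∀ z, c z ≤ C) (u : ℕ → ι) :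
    limsup (fun n => c (u n)) atTop ≤ C :=
  limsup_le_of_le_of_tendsto (isBoundedUnder_of ⟨0, fun n => hc0 (u n)⟩) (fun n => hcC (u n))
    tendsto_const_nhds

lemma liminf_le_limsup_comp (hc0 : ∀ z, 0 ≤ c z) (hcC : ∀ z, c z ≤ C) (u : ℕ → ι) :
    liminf (fun n => c (u n)) atTop ≤ limsup (fun n => c (u n)) atTop :=
  liminf_le_limsup (isBoundedUnder_of ⟨C, fun n => hcC (u n)⟩)
    (isBoundedUnder_of ⟨0, fun n => hc0 (u n)⟩)

lemma lowerDist_le_liminf (hc0 : ∀ z, 0 ≤ c z) (hcC : ∀ z, c z ≤ C) {t : ℝ} {u : ℕ → ι}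
    (hu : IsMinimizingSeq a c t u) : lowerDist a c t ≤ liminf (fun n => c (u n)) atTop := by
  refine csInf_le ⟨0, ?_⟩ ⟨u, hu, rfl⟩
  rintro _ ⟨v, -, rfl⟩
  exact liminf_comp_nonneg hc0 hcC v

lemma limsup_le_upperDist (hc0 : ∀ z, 0 ≤ c z) (hcC : ∀ z, c z ≤ C) {t : ℝ} {u : ℕ → ι}
    (hu : IsMinimizingSeq a c t u) : limsup (fun n => c (u n)) atTop ≤ upperDist a c t := by
  refine le_csSup ⟨C, ?_⟩ ⟨u, hu, rfl⟩
  rintro _ ⟨v, -, rfl⟩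
  exact limsup_comp_le hc0 hcC v

lemma lowerDist_nonneg [Nonempty ι] (ha : BddBelow (range a)) (hc0 : ∀ z, 0 ≤ c z)
    (hcC : ∀ z, c z ≤ C) {t : ℝ} (ht : 0 ≤ t) : 0 ≤ lowerDist a c t := by
  obtain ⟨u, hu⟩ := exists_isMinimizingSeq (c := c) ha ht
  refine le_csInf ⟨_, u, hu, rfl⟩ ?_
  rintro _ ⟨v, -, rfl⟩
  exact liminf_comp_nonneg hc0 hcC v

lemma lowerDist_le_upperDist [Nonempty ι] (ha : BddBelow (range a)) (hc0 : ∀ z, 0 ≤ c z)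
    (hcC : ∀ z, c z ≤ C) {t : ℝ} (ht : 0 ≤ t) : lowerDist a c t ≤ upperDist a c t := by
  obtain ⟨u, hu⟩ := exists_isMinimizingSeq (c := c) ha ht
  calc lowerDist a c t ≤ liminf (fun n => c (u n)) atTop := lowerDist_le_liminf hc0 hcC hu
    _ ≤ limsup (fun n => c (u n)) atTop := liminf_le_limsup_comp hc0 hcC u
    _ ≤ upperDist a c t := limsup_le_upperDist hc0 hcC hu

lemma upperDist_nonneg [Nonempty ι] (ha : BddBelow (range a)) (hc0 : ∀ z, 0 ≤ c z)
    (hcC : ∀ z, c z ≤ C) {t : ℝ} (ht : 0 ≤ t) : 0 ≤ upperDist a c t :=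
  (lowerDist_nonneg ha hc0 hcC ht).trans (lowerDist_le_upperDist ha hc0 hcC ht)

lemma upperDist_le_sqrt_chordSlope [Nonempty ι] (ha : BddBelow (range a)) (hc0 : ∀ z, 0 ≤ c z)
    {x y : ℝ} (hx : 0 < x) (hxy : x < y) : upperDist a c x ≤ √(chordSlope a c x y) := by
  obtain ⟨u, hu⟩ := exists_isMinimizingSeq (c := c) ha hx.le
  refine csSup_le ⟨_, u, hu, rfl⟩ ?_
  rintro _ ⟨v, hv, rfl⟩
  exact limsup_le_sqrt_chordSlope ha hc0 hx hxy hv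

lemma sqrt_chordSlope_le_lowerDist [Nonempty ι] (ha : BddBelow (range a)) (hc0 : ∀ z, 0 ≤ c z)
    (hcC : ∀ z, c z ≤ C) {x y : ℝ} (hx : 0 < x) (hxy : x < y) :
    √(chordSlope a c x y) ≤ lowerDist a c y := by
  obtain ⟨u, hu⟩ := exists_isMinimizingSeq (c := c) ha (hx.trans hxy).le
  refine le_csInf ⟨_, u, hu, rfl⟩ ?_
  rintro _ ⟨v, hv, rfl⟩
  exact sqrt_chordSlope_le_liminf ha hc0 hcC hx hxy hv

lemma monotoneOn_lowerDist [Nonempty ι] (ha : BddBelow (range a)) (hc0 : ∀ z, 0 ≤ c z)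
    (hcC : ∀ z, c z ≤ C) : MonotoneOn (lowerDist a c) (Ioi 0) := by
  intro x hx y _ hxy
  rcases hxy.eq_or_lt with rfl | hlt
  · rfl
  · calc lowerDist a c x ≤ upperDist a c x := lowerDist_le_upperDist ha hc0 hcC (le_of_lt hx)
      _ ≤ √(chordSlope a c x y) := upperDist_le_sqrt_chordSlope ha hc0 hx hlt
      _ ≤ lowerDist a c y := sqrt_chordSlope_le_lowerDist ha hc0 hcC hx hlt

lemma monotoneOn_upperDist [Nonempty ι] (ha : BddBelow (range a)) (hc0 : ∀ z, 0 ≤ c z)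
    (hcC : ∀ z, c z ≤ C) : MonotoneOn (upperDist a c) (Ioi 0) := by
  intro x hx y hy hxy
  rcases hxy.eq_or_lt with rfl | hlt
  · rfl
  · calc upperDist a c x ≤ √(chordSlope a c x y) := upperDist_le_sqrt_chordSlope ha hc0 hx hlt
      _ ≤ lowerDist a c y := sqrt_chordSlope_le_lowerDist ha hc0 hcC hx hlt
      _ ≤ upperDist a c y := lowerDist_le_upperDist ha hc0 hcC (le_of_lt hy)

lemma isLUB_lowerDist_Ioo [Nonempty ι] (ha : BddBelow (range a)) (hc0 : ∀ z, 0 ≤ c z)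
    (hcC : ∀ z, c z ≤ C) {t : ℝ} (ht : 0 < t) :
    IsLUB (lowerDist a c '' Ioo 0 t) (lowerDist a c t) := by
  refine ⟨?_, fun L hL => ?_⟩
  · rintro _ ⟨s, hs, rfl⟩
    exact monotoneOn_lowerDist ha hc0 hcC hs.1 ht hs.2.le
  replace hL : ∀ s ∈ Ioo 0 t, lowerDist a c s ≤ L := fun s hs => hL ⟨s, hs, rfl⟩
  have hL0 : 0 ≤ L :=
    (lowerDist_nonneg ha hc0 hcC (half_pos ht).le).trans (hL _ ⟨half_pos ht, half_lt_self ht⟩)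
  obtain ⟨u, hu_mono, hu_mem, hu_lim⟩ := exists_seq_strictMono_tendsto' ht
  set δ : ℕ → ℝ := fun m => (2 * u m)⁻¹ - (2 * u (m + 1))⁻¹
  have hδ : ∀ m, 0 < δ m := fun m => inv_two_mul_sub_pos (hu_mem m).1 (hu_mono m.lt_succ_self)
  have hδ0 : Tendsto δ atTop (𝓝 0) := tendsto_inv_two_mul_sub_succ ht.ne' hu_lim
  choose z hz using fun m => exists_cost_lt (a := a) (c := c) (u m) (pow_pos (hδ m) 2)
  have hsq : ∀ m, c (z m) ^ 2 ≤ L ^ 2 + δ m := by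
    intro m
    have hslope : c (z m) ^ 2 ≤ chordSlope a c (u m) (u (m + 1)) + δ m ^ 2 / δ m :=
      sq_le_chordSlope_add ha (hu_mem m).1 (hu_mono m.lt_succ_self) (hz m).le
    rw [sq (δ m), mul_self_div_self] at hslope
    have hD0 := lowerDist_nonneg ha hc0 hcC (hu_mem (m + 1)).1.le
    have hD := (Real.sqrt_le_left hD0).1
      (sqrt_chordSlope_le_lowerDist ha hc0 hcC (hu_mem m).1 (hu_mono m.lt_succ_self))
    have hDL := pow_le_pow_left₀ hD0 (hL _ (hu_mem (m + 1))) 2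
    linarith
  have hmin : IsMinimizingSeq a c t z :=
    isMinimizingSeq_of_tendsto ha hc0 hcC ht (fun m => (hu_mem m).1) hu_lim
      (by simpa using hδ0.pow 2) (fun m => (hz m).le)
  calc lowerDist a c t ≤ liminf (fun m => c (z m)) atTop := lowerDist_le_liminf hc0 hcC hmin
    _ ≤ limsup (fun m => c (z m)) atTop := liminf_le_limsup_comp hc0 hcC z
    _ ≤ L := limsup_le_of_le_of_tendsto (isBoundedUnder_of ⟨0, fun n => hc0 (z n)⟩)
        (fun m => Real.le_sqrt_of_sq_le (hsq m)) (tendsto_sqrt_sq_add hL0 hδ0)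

lemma isGLB_upperDist_Ioi [Nonempty ι] (ha : BddBelow (range a)) (hc0 : ∀ z, 0 ≤ c z)
    (hcC : ∀ z, c z ≤ C) {t : ℝ} (ht : 0 < t) :
    IsGLB (upperDist a c '' Ioi t) (upperDist a c t) := by
  refine ⟨?_, fun L hL => ?_⟩
  · rintro _ ⟨s, hs, rfl⟩
    exact monotoneOn_upperDist ha hc0 hcC ht (ht.trans hs) (le_of_lt hs)
  replace hL : ∀ s, t < s → L ≤ upperDist a c s := fun s hs => hL ⟨s, hs, rfl⟩
  rcases le_or_gt L 0 with hL0 | hL0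
  · exact hL0.trans (upperDist_nonneg ha hc0 hcC ht.le)
  obtain ⟨u, hu_anti, hu_mem, hu_lim⟩ := exists_seq_strictAnti_tendsto' (lt_add_one t)
  have hu0 : ∀ m, 0 < u m := fun m => ht.trans (hu_mem m).1
  set δ : ℕ → ℝ := fun m => (2 * u (m + 1))⁻¹ - (2 * u m)⁻¹
  have hδ : ∀ m, 0 < δ m := fun m => inv_two_mul_sub_pos (hu0 (m + 1)) (hu_anti m.lt_succ_self)
  have hδ0 : Tendsto δ atTop (𝓝 0) := by
    simpa [δ] using (tendsto_inv_two_mul_sub_succ ht.ne' hu_lim).neg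
  choose z hz using fun m => exists_cost_lt (a := a) (c := c) (u m) (pow_pos (hδ m) 2)
  have hsq : ∀ m, L ^ 2 + -δ m ≤ c (z m) ^ 2 := by
    intro m
    have hslope : chordSlope a c (u (m + 1)) (u m) - δ m ^ 2 / δ m ≤ c (z m) ^ 2 :=
      chordSlope_sub_le_sq ha (hu0 (m + 1)) (hu_anti m.lt_succ_self) (hz m).le
    rw [sq (δ m), mul_self_div_self] at hslope
    have hD := (Real.le_sqrt (upperDist_nonneg ha hc0 hcC (hu0 _).le)
      (chordSlope_nonneg ha (hu0 _) (hu_anti m.lt_succ_self))).1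
      (upperDist_le_sqrt_chordSlope ha hc0 (hu0 (m + 1)) (hu_anti m.lt_succ_self))
    have hLD := pow_le_pow_left₀ hL0.le (hL _ (hu_mem (m + 1)).1) 2
    linarith
  have hmin : IsMinimizingSeq a c t z :=
    isMinimizingSeq_of_tendsto ha hc0 hcC ht hu0 hu_lim (by simpa using hδ0.pow 2)
      (fun m => (hz m).le)
  calc L ≤ liminf (fun m => c (z m)) atTop :=
        le_liminf_of_le_of_tendsto (isBoundedUnder_of ⟨C, fun n => hcC (z n)⟩)
          (fun m => (Real.sqrt_le_left (hc0 _)).2 (hsq m))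
          (tendsto_sqrt_sq_add hL0.le (by simpa using hδ0.neg))
    _ ≤ limsup (fun m => c (z m)) atTop := liminf_le_limsup_comp hc0 hcC z
    _ ≤ upperDist a c t := limsup_le_upperDist hc0 hcC hmin

lemma tendsto_lowerDist_nhdsLT [Nonempty ι] (ha : BddBelow (range a)) (hc0 : ∀ z, 0 ≤ c z)
    (hcC : ∀ z, c z ≤ C) {t : ℝ} (ht : 0 < t) :
    Tendsto (lowerDist a c) (𝓝[<] t) (𝓝 (lowerDist a c t)) := by
  have h := isLUB_lowerDist_Ioo ha hc0 hcC ht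
  rw [← h.csSup_eq ((nonempty_Ioo.2 ht).image _)]
  exact ((monotoneOn_lowerDist ha hc0 hcC).mono Ioo_subset_Ioi_self).tendsto_nhdsWithin_Ioo_left
    (nonempty_Ioo.2 ht) h.bddAbove

lemma tendsto_upperDist_nhdsGT [Nonempty ι] (ha : BddBelow (range a)) (hc0 : ∀ z, 0 ≤ c z)
    (hcC : ∀ z, c z ≤ C) {t : ℝ} (ht : 0 < t) :
    Tendsto (upperDist a c) (𝓝[>] t) (𝓝 (upperDist a c t)) := by
  have h := isGLB_upperDist_Ioi ha hc0 hcC ht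
  rw [← h.csInf_eq (nonempty_Ioi.image _)]
  exact ((monotoneOn_upperDist ha hc0 hcC).mono (Ioi_subset_Ioi ht.le)).tendsto_nhdsGT h.bddBelow

end

end HopfLax

theorem stmt_7_general (κ : ℕ)
    (Y : Set (EuclideanSpace ℝ (Fin κ)))
    (π : EuclideanSpace ℝ (Fin κ) → Y)
    (f : Y → EuclideanSpace ℝ (Fin κ))
    (hfb : Bornology.IsBounded (Set.range f))

    (y : Y) :
    (∀ t : ℝ, 0 < t →
      Filter.Tendsto (fun s => iDm Y π f y s) (nhdsWithin t (Set.Ioo 0 t))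
        (nhds (iDm Y π f y t))) ∧
    (∀ t : ℝ, 0 < t →
      Filter.Tendsto (fun s => iDp Y π f y s) (nhdsWithin t (Set.Ioi t))
        (nhds (iDp Y π f y t))) := by
  have : Nonempty Y := ⟨y⟩
  obtain ⟨R, hR⟩ := isBounded_iff_forall_norm_le.1 hfb
  have ha : BddBelow (range fun z => ⨆ j, f z j) := ⟨-R, by
    rintro _ ⟨z, rfl⟩
    exact (neg_le_neg (hR _ (mem_range_self z))).trans (neg_norm_le_iSup_apply (f z))⟩
  have hc0 (z : Y) : 0 ≤ infDist (f z) (π ⁻¹' {y}) := infDist_nonneg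
  have hcC (z : Y) : infDist (f z) (π ⁻¹' {y}) ≤ infDist (f y) (π ⁻¹' {y}) + diam (range f) :=
    infDist_le_infDist_add_dist.trans <|
      add_le_add_right (dist_le_diam_of_mem hfb (mem_range_self z) (mem_range_self y)) _
  exact ⟨fun t ht => (HopfLax.tendsto_lowerDist_nhdsLT ha hc0 hcC ht).mono_left
      (nhdsWithin_mono _ Ioo_subset_Iio_self),
    fun t ht => HopfLax.tendsto_upperDist_nhdsGT ha hc0 hcC ht⟩

theorem stmt_7 (κ : ℕ) (hκ : 1 ≤ κ)
    (Y : Set (EuclideanSpace ℝ (Fin κ))) (hY : Y.Nonempty) (hYb : Bornology.IsBounded Y)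
    (π : EuclideanSpace ℝ (Fin κ) → Y) (hπc : Continuous π) (hπo : IsOpenMap π)
    (hπs : Function.Surjective π)
    (f : Y → EuclideanSpace ℝ (Fin κ)) (hfc : Continuous f)
    (hfb : Bornology.IsBounded (Set.range f)) (hsec : ∀ y : Y, π (f y) = y)

    (y : Y) :
    (∀ t : ℝ, 0 < t →
      Filter.Tendsto (fun s => iDm Y π f y s) (nhdsWithin t (Set.Ioo 0 t))
        (nhds (iDm Y π f y t))) ∧
    (∀ t : ℝ, 0 < t →
      Filter.Tendsto (fun s => iDp Y π f y s) (nhdsWithin t (Set.Ioi t))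
        (nhds (iDp Y π f y t))) :=
  stmt_7_general κ Y π f hfb y
end
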